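/- arXiv:2111.05275 — 3 statements merged into one kernel-verified Lean document; each statement's English description precedes it below -/
import Mathlib

section
/- Let H ⊆ {0,1}^X be a concept class that admits a stable sample compression scheme (κ, ρ) of size k, and let A be the deterministic algorithm A(s) = ρ(κ(s)). Then for every distribution D realizable by H and every n ≥ k, CMI_D(A) ≤ 2k · log 2. -/
/- STATEMENT 2: a stable sample compression scheme (κ, ρ) of size k for H yields
CMI_D(A) ≤ 2 k log 2 for every H-realizable distribution D and n ≥ k, where A = ρ ∘ κ. -/

open MeasureTheory ProbabilityTheory Real

noncomputable section

def cprob {Ω α : Type*} [MeasurableSpace Ω] [DecidableEq α]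
    (μ : Measure Ω) (V : Ω → α) (v : α) (G : MeasurableSpace Ω) : Ω → ℝ :=
  μ[fun ω => if V ω = v then (1 : ℝ) else 0 | G]

def condEnt {Ω α : Type*} [mΩ : MeasurableSpace Ω] [Fintype α] [DecidableEq α]
    (μ : Measure Ω) (V : Ω → α) (G : MeasurableSpace Ω) : ℝ :=
  ∫ ω, ∑ v : α,
    -((@cprob Ω α mΩ _ μ V v G) ω * Real.log ((@cprob Ω α mΩ _ μ V v G) ω)) ∂μ

/-- conditional mutual information I(W;U|Z) := H(U|σ(Z)) - H(U|σ(Z)⊔σ(W)). -/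
def condMI {Ω α β γ : Type*} [MeasurableSpace Ω] [Fintype α] [DecidableEq α]
    (μ : Measure Ω) (U : Ω → α) (W : Ω → β) (mW : MeasurableSpace β)
    (Z : Ω → γ) (mZ : MeasurableSpace γ) : ℝ :=
  condEnt μ U (MeasurableSpace.comap Z mZ)
    - condEnt μ U (MeasurableSpace.comap Z mZ ⊔ MeasurableSpace.comap W mW)

abbrev SupOmega (X : Type*) (n : ℕ) := ((Fin 2 × Fin n) → X × Bool) × (Fin n → Fin 2)

def supMeasure {X : Type*} [MeasurableSpace X] (n : ℕ) (D : Measure (X × Bool)) :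
    Measure (SupOmega X n) :=
  (Measure.pi fun _ => D).prod (Measure.pi fun _ => (PMF.uniformOfFintype (Fin 2)).toMeasure)

def trainOf {X : Type*} {n : ℕ} (ω : SupOmega X n) : Fin n → X × Bool :=
  fun j => ω.1 (ω.2 j, j)

/-- a multiset of labeled examples is realizable by `H`. -/
def RealizableM {X : Type*} (H : Set (X → Bool)) (s : Multiset (X × Bool)) : Prop :=
  ∃ h ∈ H, ∀ z ∈ s, h z.1 = z.2

/-- the multiset of examples in a sample. -/
def toMultiset {X : Type*} {n : ℕ} (s : Fin n → X × Bool) : Multiset (X × Bool) :=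
  (Finset.univ : Finset (Fin n)).val.map s

/-- (κ, ρ) is a stable sample compression scheme of size `k` for `H`:
on every `H`-realizable sample of size ≥ k, κ picks a size-k sub-multiset (symmetry is
automatic since κ acts on multisets), ρ ∘ κ is an empirical risk minimizer, and removing
examples outside the compression set does not change the output. -/
structure StableCompressionScheme {X : Type*} (H : Set (X → Bool)) (k : ℕ)
    (κ : Multiset (X × Bool) → Multiset (X × Bool))
    (ρ : Multiset (X × Bool) → X → Bool) : Prop where
  sub : ∀ s, RealizableM H s → k ≤ Multiset.card s → κ s ≤ s
  size : ∀ s, RealizableM H s → k ≤ Multiset.card s → Multiset.card (κ s) = k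
  erm : ∀ s, RealizableM H s → k ≤ Multiset.card s → ∀ z ∈ s, ρ (κ s) z.1 = z.2
  stable : ∀ s, RealizableM H s → k ≤ Multiset.card s →
    ∀ s', κ s ≤ s' → s' ≤ s → ρ (κ s') = ρ (κ s)

open Finset

/-!
Write the supersample as `(Z, U)` with `U` uniform on `{0,1}ⁿ` and independent of `Z`, and let
`W = A(Z_U)`. Then `H(U | Z) = n log 2`, while given `Z` and `W` the label `U` is uniform on the
set of `u'` with `W(Z, u') = W(Z, U)`, so `H(U | Z, W) = E[log #{u' | W(Z, u') = W(Z, U)}]`.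
Since `W` takes values in a space whose diagonal need not be measurable, one conditions instead on
the vector of conditional probabilities `P(U = · | Z, W)`: it yields the same conditional law of
`U`, and its fibres contain those of `W`.

If the `2n` examples are realizable, stability gives index sets `J u` of size `k` (the positions of
the compression set of the sample selected by `u`) such that `W(Z, u) = W(Z, u')` whenever `u` and
`u'` agree on `J u ∪ J u'`. So `W` does not change when a coordinate `j ∉ J u ∪ J (flipAt j u)` is
flipped, which happens for at least `(n - 2k) 2ⁿ` of the pairs `(u, j)`. An induction over
subcubes shows that the fibres of any function `F` on the cube satisfy
`∏ᵤ #fibre(u) ≥ 2 ^ #{(u, j) | F (flipAt j u) = F u}`. Hence `H(U | Z, W) ≥ (n - 2k) log 2`.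
-/

section Subcube

variable {ι : Type*} [DecidableEq ι]

def flipAt (j : ι) (u : ι → Fin 2) : ι → Fin 2 :=
  Function.update u j (u j).rev

lemma flipAt_apply_self (j : ι) (u : ι → Fin 2) : flipAt j u j = (u j).rev :=
  Function.update_self _ _ _

lemma flipAt_apply_of_ne {i j : ι} (h : i ≠ j) (u : ι → Fin 2) : flipAt j u i = u i :=
  Function.update_of_ne h _ _

lemma flipAt_involutive (j : ι) : Function.Involutive (flipAt j) := by
  intro u
  funext i
  rcases eq_or_ne i j with rfl | h
  · simp [flipAt_apply_self]
  · simp [flipAt_apply_of_ne h]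

variable [Fintype ι]

def subcube (A : Finset ι) (b : ι → Fin 2) : Finset (ι → Fin 2) :=
  {u | ∀ i ∉ A, u i = b i}

lemma mem_subcube {A : Finset ι} {b u : ι → Fin 2} : u ∈ subcube A b ↔ ∀ i ∉ A, u i = b i := by
  simp [subcube]

lemma subcube_univ (b : ι → Fin 2) : subcube univ b = univ := by
  ext u; simp [mem_subcube]

lemma filter_subcube_insert {j : ι} {A : Finset ι} (hj : j ∉ A) (b : ι → Fin 2) (ε : Fin 2) :
    {u ∈ subcube (insert j A) b | u j = ε} = subcube A (Function.update b j ε) := by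
  ext u
  simp only [mem_filter, mem_subcube, mem_insert, not_or]
  constructor
  · rintro ⟨hu, rfl⟩ i hi
    rcases eq_or_ne i j with rfl | hij
    · simp
    · rw [Function.update_of_ne hij]; exact hu i ⟨hij, hi⟩
  · intro hu
    refine ⟨fun i hi => ?_, by simpa using hu j hj⟩
    simpa [Function.update_of_ne hi.1] using hu i hi.2

lemma flipAt_mem_subcube {j : ι} {A : Finset ι} (hj : j ∈ A) {b u : ι → Fin 2}
    (hu : u ∈ subcube A b) : flipAt j u ∈ subcube A b := by
  rw [mem_subcube] at hu ⊢
  intro i hi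
  rw [flipAt_apply_of_ne (ne_of_mem_of_not_mem hj hi).symm]
  exact hu i hi

end Subcube

def fiberCard {α β : Type*} [DecidableEq β] (F : α → β) (S : Finset α) (u : α) : ℕ :=
  #{v ∈ S | F v = F u}

section FiberCard

variable {α β : Type*} [DecidableEq β]

lemma one_le_fiberCard (F : α → β) {S : Finset α} {u : α} (hu : u ∈ S) : 1 ≤ fiberCard F S u :=
  card_pos.2 ⟨u, mem_filter.2 ⟨hu, rfl⟩⟩

lemma fiberCard_mono (F : α → β) {S T : Finset α} (h : S ⊆ T) (u : α) :
    fiberCard F S u ≤ fiberCard F T u :=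
  card_le_card (filter_subset_filter _ h)

lemma fiberCard_congr (F : α → β) (S : Finset α) {u v : α} (h : F u = F v) :
    fiberCard F S u = fiberCard F S v := by
  simp only [fiberCard, h]

lemma fiberCard_add_fiberCard_le (F : α → β) {S T U : Finset α} (hST : Disjoint S T)
    (hSU : S ⊆ U) (hTU : T ⊆ U) (u : α) :
    fiberCard F S u + fiberCard F T u ≤ fiberCard F U u := by
  classical
  rw [fiberCard, fiberCard, ← card_union_of_disjoint (disjoint_filter_filter hST), ← filter_union]
  exact fiberCard_mono F (union_subset hSU hTU) u

lemma fiberCard_le_card (F : α → β) (S : Finset α) (u : α) : fiberCard F S u ≤ #S :=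
  card_filter_le S _

lemma fiberCard_le_fiberCard {γ : Type*} [DecidableEq γ] {F : α → β} {G : α → γ}
    (hFG : ∀ a b, F a = F b → G a = G b) (S : Finset α) (u : α) :
    fiberCard F S u ≤ fiberCard G S u :=
  card_le_card (monotone_filter_right S fun v _ hv => hFG v u hv)

variable [Fintype α]

lemma sum_mul_ite_inv_fiberCard (F : α → β) (φ : β → ℝ) (u : α) :
    ∑ w, φ (F w) * (if F u = F w then (fiberCard F univ w : ℝ)⁻¹ else 0) = φ (F u) := by
  have hc : (fiberCard F univ u : ℝ) ≠ 0 := (Nat.cast_pos.2 (one_le_fiberCard F (mem_univ u))).ne'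
  calc ∑ w, φ (F w) * (if F u = F w then (fiberCard F univ w : ℝ)⁻¹ else 0)
      = ∑ w, if F w = F u then φ (F u) * (fiberCard F univ u : ℝ)⁻¹ else 0 := by
        refine sum_congr rfl fun w _ => ?_
        by_cases h : F w = F u
        · rw [if_pos h.symm, if_pos h, h, fiberCard_congr F univ h]
        · rw [if_neg (Ne.symm h), if_neg h, mul_zero]
    _ = fiberCard F univ u * (φ (F u) * (fiberCard F univ u : ℝ)⁻¹) := by
        rw [← sum_filter, sum_const, nsmul_eq_mul]; rfl
    _ = φ (F u) := by field_simp

lemma sum_negMulLog_ite_inv_fiberCard (F : α → β) (u : α) :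
    ∑ v, Real.negMulLog (if F v = F u then (fiberCard F univ u : ℝ)⁻¹ else 0)
      = Real.log (fiberCard F univ u) := by
  have hc : (fiberCard F univ u : ℝ) ≠ 0 := (Nat.cast_pos.2 (one_le_fiberCard F (mem_univ u))).ne'
  simp_rw [apply_ite Real.negMulLog, Real.negMulLog_zero]
  rw [← sum_filter, sum_const, nsmul_eq_mul]
  change (fiberCard F univ u : ℝ) * _ = _
  rw [Real.negMulLog, Real.log_inv]
  field_simp

end FiberCard

section Hypercube

variable {ι β : Type*} [DecidableEq ι] [Fintype ι] [DecidableEq β]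

def flatDirs (F : (ι → Fin 2) → β) (A : Finset ι) (u : ι → Fin 2) : Finset ι :=
  {j ∈ A | F (flipAt j u) = F u}

/-- Splitting along `j`: if `F` is constant along `j` at `u`, the fibres of `u` and `flipAt j u` in
the two halves are disjoint parts of a single fibre of the whole subcube, and `4ab ≤ (a + b)²`. -/
lemma fiberCard_halves_mul_le (F : (ι → Fin 2) → β) {j : ι} {A : Finset ι} (hj : j ∉ A)
    (b u : ι → Fin 2) :
    fiberCard F (subcube A (Function.update b j (u j))) u
      * fiberCard F (subcube A (Function.update b j (flipAt j u j))) (flipAt j u)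
      * 4 ^ (if F (flipAt j u) = F u then 1 else 0)
    ≤ fiberCard F (subcube (insert j A) b) u
      * fiberCard F (subcube (insert j A) b) (flipAt j u) := by
  set C := subcube (insert j A) b
  have half_eq : ∀ ε, subcube A (Function.update b j ε) = {v ∈ C | v j = ε} := fun ε =>
    (filter_subcube_insert hj b ε).symm
  have half_sub : ∀ ε, subcube A (Function.update b j ε) ⊆ C := fun ε =>
    (half_eq ε).trans_subset (filter_subset _ _)
  split_ifs with hflat
  · have hdisj : Disjoint (subcube A (Function.update b j (u j)))
        (subcube A (Function.update b j (flipAt j u j))) := by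
      rw [half_eq, half_eq, flipAt_apply_self]
      have hrev : ∀ ε : Fin 2, ε.rev ≠ ε := by decide
      exact disjoint_filter.2 fun v _ hv hv' => hrev (u j) (hv'.symm.trans hv)
    have hsum := fiberCard_add_fiberCard_le F hdisj (half_sub _) (half_sub _) u
    simp only [fiberCard_congr F _ hflat]
    calc _ = 4 * fiberCard F (subcube A (Function.update b j (u j))) u
          * fiberCard F (subcube A (Function.update b j (flipAt j u j))) u := by ring
      _ ≤ _ := (four_mul_le_sq_add _ _).trans (by rw [sq]; exact Nat.mul_le_mul hsum hsum)
  · rw [pow_zero, mul_one]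
    exact Nat.mul_le_mul (fiberCard_mono F (half_sub _) _) (fiberCard_mono F (half_sub _) _)

theorem two_pow_flatDirs_le_prod_fiberCard (F : (ι → Fin 2) → β) (A : Finset ι) (b : ι → Fin 2) :
    2 ^ (∑ u ∈ subcube A b, #(flatDirs F A u))
      ≤ ∏ u ∈ subcube A b, fiberCard F (subcube A b) u := by
  induction A using Finset.induction_on generalizing b with
  | empty =>
    simpa [flatDirs] using one_le_prod' fun u hu => one_le_fiberCard F hu
  | @insert j A hj ih =>
    set C := subcube (insert j A) b
    set a : (ι → Fin 2) → ℕ := fun u => fiberCard F (subcube A (Function.update b j (u j))) u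
    set e : (ι → Fin 2) → ℕ := fun u => if F (flipAt j u) = F u then 1 else 0
    have hσ : ∀ g : (ι → Fin 2) → ℕ, ∏ u ∈ C, g (flipAt j u) = ∏ u ∈ C, g u := fun g =>
      prod_nbij' (flipAt j) (flipAt j) (fun u hu => flipAt_mem_subcube (mem_insert_self j A) hu)
        (fun u hu => flipAt_mem_subcube (mem_insert_self j A) hu)
        (fun u _ => flipAt_involutive j u) (fun u _ => flipAt_involutive j u) (fun _ _ => rfl)
    have hflat : ∀ u, #(flatDirs F (insert j A) u) = #(flatDirs F A u) + e u := by
      intro u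
      simp only [flatDirs, filter_insert, e]
      split_ifs with h
      · rw [card_insert_of_notMem (fun h' => hj (mem_filter.1 h').1)]
      · rfl
    have hhalves : 2 ^ (∑ u ∈ C, #(flatDirs F A u)) ≤ ∏ u ∈ C, a u := by
      rw [← prod_fiberwise C (fun u => u j), ← sum_fiberwise C (fun u => u j),
        ← prod_pow_eq_pow_sum]
      refine prod_le_prod' fun ε _ => ?_
      rw [filter_subcube_insert hj]
      refine (ih _).trans_eq (prod_congr rfl fun u hu => ?_)
      simp only [a, (mem_subcube.1 hu) j hj, Function.update_self]
    have hsq : (∏ u ∈ C, a u) ^ 2 * 4 ^ (∑ u ∈ C, e u) ≤ (∏ u ∈ C, fiberCard F C u) ^ 2 := by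
      calc (∏ u ∈ C, a u) ^ 2 * 4 ^ (∑ u ∈ C, e u)
          = ∏ u ∈ C, a u * a (flipAt j u) * 4 ^ e u := by
            rw [prod_mul_distrib, prod_mul_distrib, hσ a, prod_pow_eq_pow_sum, sq]
        _ ≤ ∏ u ∈ C, fiberCard F C u * fiberCard F C (flipAt j u) :=
            prod_le_prod' fun u _ => fiberCard_halves_mul_le F hj b u
        _ = (∏ u ∈ C, fiberCard F C u) ^ 2 := by
            rw [prod_mul_distrib, hσ (fiberCard F C), sq]
    rw [← Nat.pow_le_pow_iff_left two_ne_zero]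
    calc (2 ^ ∑ u ∈ C, #(flatDirs F (insert j A) u)) ^ 2
        = (2 ^ ∑ u ∈ C, #(flatDirs F A u)) ^ 2 * 4 ^ ∑ u ∈ C, e u := by
          rw [sum_congr rfl fun u _ => hflat u, sum_add_distrib, pow_add, mul_pow,
            ← pow_mul, ← pow_mul,
            show (4 : ℕ) = 2 ^ 2 from rfl, ← pow_mul, mul_comm 2]
      _ ≤ (∏ u ∈ C, a u) ^ 2 * 4 ^ ∑ u ∈ C, e u := by gcongr
      _ ≤ _ := hsq

lemma card_mul_two_pow_le_sum_flatDirs (F : (ι → Fin 2) → β) (J : (ι → Fin 2) → Finset ι)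
    {k : ℕ} (hJ : ∀ u, #(J u) ≤ k) (hF : ∀ u u', (∀ j ∈ J u ∪ J u', u j = u' j) → F u = F u') :
    Fintype.card ι * 2 ^ Fintype.card ι
      ≤ ∑ u, #(flatDirs F univ u) + 2 * k * 2 ^ Fintype.card ι := by
  have hpoint : ∀ u,
      Fintype.card ι ≤ #(flatDirs F univ u) + #(J u) + #{j | j ∈ J (flipAt j u)} := by
    intro u
    refine (card_le_card fun j _ => ?_).trans
      ((card_union_le _ _).trans (add_le_add (card_union_le _ _) le_rfl))
    by_cases hj : j ∈ J u ∨ j ∈ J (flipAt j u)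
    · rcases hj with hj | hj <;> simp [hj]
    · rw [not_or] at hj
      refine mem_union_left _ (mem_union_left _ (mem_filter.2 ⟨mem_univ j, hF _ _ fun i hi => ?_⟩))
      refine flipAt_apply_of_ne (fun hij => ?_) u
      rcases mem_union.1 hi with h | h <;> [exact hj.2 (hij ▸ h); exact hj.1 (hij ▸ h)]
  have hswap : ∑ u, #{j | j ∈ J (flipAt j u)} = ∑ u, #(J u) := by
    calc ∑ u, #{j | j ∈ J (flipAt j u)}
        = ∑ j, ∑ u, if j ∈ J (flipAt j u) then 1 else 0 := by
          simp only [card_filter]; exact sum_comm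
      _ = ∑ j, ∑ u, if j ∈ J u then 1 else 0 := sum_congr rfl fun j _ =>
          (flipAt_involutive j).bijective.sum_comp fun u => if j ∈ J u then 1 else 0
      _ = ∑ u, #(J u) := by rw [sum_comm]; simp
  have hcard : Fintype.card (ι → Fin 2) = 2 ^ Fintype.card ι := by simp
  calc Fintype.card ι * 2 ^ Fintype.card ι = ∑ _u : ι → Fin 2, Fintype.card ι := by
        simp [hcard, mul_comm]
    _ ≤ ∑ u, (#(flatDirs F univ u) + #(J u) + #{j | j ∈ J (flipAt j u)}) :=
        sum_le_sum fun u _ => hpoint u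
    _ = ∑ u, #(flatDirs F univ u) + 2 * ∑ u, #(J u) := by
        rw [sum_add_distrib, sum_add_distrib, hswap]; ring
    _ ≤ ∑ u, #(flatDirs F univ u) + 2 * ∑ _u : ι → Fin 2, k := by gcongr with u; exact hJ u
    _ = _ := by simp [hcard]; ring

theorem card_sub_two_mul_log_two_le_sum_log_fiberCard (F : (ι → Fin 2) → β)
    (J : (ι → Fin 2) → Finset ι) {k : ℕ} (hJ : ∀ u, #(J u) ≤ k)
    (hF : ∀ u u', (∀ j ∈ J u ∪ J u', u j = u' j) → F u = F u') :
    ((Fintype.card ι : ℝ) - 2 * k) * 2 ^ Fintype.card ι * Real.log 2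
      ≤ ∑ u, Real.log (fiberCard F univ u) := by
  have hcount : ((Fintype.card ι : ℝ) - 2 * k) * 2 ^ Fintype.card ι
      ≤ ∑ u, (#(flatDirs F univ u) : ℝ) := by
    have := card_mul_two_pow_le_sum_flatDirs F J hJ hF
    rw [sub_mul, sub_le_iff_le_add]
    exact_mod_cast this
  have hprod : ((2 ^ ∑ u, #(flatDirs F univ u) : ℕ) : ℝ) ≤ ∏ u, (fiberCard F univ u : ℝ) := by
    have h := two_pow_flatDirs_le_prod_fiberCard F univ 0
    rw [subcube_univ] at h
    exact_mod_cast h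
  calc ((Fintype.card ι : ℝ) - 2 * k) * 2 ^ Fintype.card ι * Real.log 2
      ≤ (∑ u, (#(flatDirs F univ u) : ℝ)) * Real.log 2 := by gcongr
    _ = Real.log ((2 ^ ∑ u, #(flatDirs F univ u) : ℕ) : ℝ) := by
        rw [Nat.cast_pow, Real.log_pow, Nat.cast_sum, Nat.cast_ofNat]
    _ ≤ Real.log (∏ u, (fiberCard F univ u : ℝ)) :=
        Real.log_le_log (by positivity) hprod
    _ = ∑ u, Real.log (fiberCard F univ u) := Real.log_prod fun u _ =>
        (Nat.cast_pos.2 (one_le_fiberCard F (mem_univ u))).ne'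

end Hypercube

lemma Multiset.exists_le_map_eq_of_le_map {α β : Type*} (g : α → β) {c : Multiset β}
    {m : Multiset α} (h : c ≤ m.map g) : ∃ d ≤ m, d.map g = c := by
  classical
  induction m using Multiset.induction_on generalizing c with
  | empty => exact ⟨0, le_rfl, (Multiset.le_zero.1 h).symm⟩
  | cons a m ih =>
    rw [Multiset.map_cons] at h
    by_cases ha : g a ∈ c
    · rw [← Multiset.cons_erase ha, Multiset.cons_le_cons_iff] at h
      obtain ⟨d, hd, hdc⟩ := ih h
      exact ⟨a ::ₘ d, Multiset.cons_le_cons a hd,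
        by rw [Multiset.map_cons, hdc, Multiset.cons_erase ha]⟩
    · obtain ⟨d, hd, hdc⟩ := ih ((Multiset.le_cons_of_notMem ha).1 h)
      exact ⟨d, hd.trans (Multiset.le_cons_self m a), hdc⟩

lemma card_toMultiset {X : Type*} {n : ℕ} (s : Fin n → X × Bool) :
    Multiset.card (toMultiset s) = n := by
  simp [toMultiset]

namespace StableCompressionScheme

variable {X : Type*} {H : Set (X → Bool)} {k : ℕ} {κ : Multiset (X × Bool) → Multiset (X × Bool)}
  {ρ : Multiset (X × Bool) → X → Bool} {n : ℕ}

lemma exists_finset_eq_kappa (hscheme : StableCompressionScheme H k κ ρ) (hn : k ≤ n)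
    {s : Fin n → X × Bool} (hs : RealizableM H (toMultiset s)) :
    ∃ J : Finset (Fin n), #J = k ∧ κ (toMultiset s) = J.val.map s := by
  have hcard : k ≤ Multiset.card (toMultiset s) := (card_toMultiset s).symm ▸ hn
  obtain ⟨d, hd, hds⟩ := Multiset.exists_le_map_eq_of_le_map s (hscheme.sub _ hs hcard)
  refine ⟨⟨d, Multiset.nodup_of_le hd univ.nodup⟩, ?_, hds.symm⟩
  change Multiset.card d = k
  rw [← hscheme.size _ hs hcard, toMultiset, ← hds, Multiset.card_map]

lemma rho_kappa_eq_of_eqOn (hscheme : StableCompressionScheme H k κ ρ) (hn : k ≤ n)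
    {s s' : Fin n → X × Bool} (hs : RealizableM H (toMultiset s))
    (hs' : RealizableM H (toMultiset s')) {J J' : Finset (Fin n)}
    (hJ : κ (toMultiset s) = J.val.map s) (hJ' : κ (toMultiset s') = J'.val.map s')
    (hss' : ∀ j ∈ J ∪ J', s j = s' j) :
    ρ (κ (toMultiset s)) = ρ (κ (toMultiset s')) := by
  classical
  have hcard : ∀ s : Fin n → X × Bool, k ≤ Multiset.card (toMultiset s) := fun s =>
    (card_toMultiset s).symm ▸ hn
  set T : Finset (Fin n) := {j | s j = s' j}
  have hJT : J ⊆ T := fun j hj => mem_filter.2 ⟨mem_univ j, hss' j (mem_union_left _ hj)⟩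
  have hJ'T : J' ⊆ T := fun j hj => mem_filter.2 ⟨mem_univ j, hss' j (mem_union_right _ hj)⟩
  have hT : T.val.map s = T.val.map s' :=
    Multiset.map_congr rfl fun j hj => by simpa [T] using hj
  have h₁ := hscheme.stable _ hs (hcard s) (T.val.map s)
    (hJ ▸ Multiset.map_le_map (val_le_iff.2 hJT))
    (Multiset.map_le_map (val_le_iff.2 (subset_univ T)))
  have h₂ := hscheme.stable _ hs' (hcard s') (T.val.map s')
    (hJ' ▸ Multiset.map_le_map (val_le_iff.2 hJ'T))
    (Multiset.map_le_map (val_le_iff.2 (subset_univ T)))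
  rw [← h₁, ← h₂, hT]

theorem exists_compressionIndices (hscheme : StableCompressionScheme H k κ ρ) (hn : k ≤ n)
    {z : Fin 2 × Fin n → X × Bool} (hz : ∃ h ∈ H, ∀ c, h (z c).1 = (z c).2) :
    ∃ J : (Fin n → Fin 2) → Finset (Fin n), (∀ u, #(J u) ≤ k) ∧
      ∀ u u', (∀ j ∈ J u ∪ J u', u j = u' j) →
        ρ (κ (toMultiset fun j => z (u j, j))) = ρ (κ (toMultiset fun j => z (u' j, j))) := by
  obtain ⟨h, hH, hhz⟩ := hz
  have hreal : ∀ u : Fin n → Fin 2, RealizableM H (toMultiset fun j => z (u j, j)) := by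
    intro u
    refine ⟨h, hH, fun e he => ?_⟩
    obtain ⟨j, -, rfl⟩ := Multiset.mem_map.1 he
    exact hhz _
  choose J hJk hJ using fun u => hscheme.exists_finset_eq_kappa hn (hreal u)
  refine ⟨J, fun u => (hJk u).le, fun u u' huu' => ?_⟩
  exact hscheme.rho_kappa_eq_of_eqOn hn (hreal u) (hreal u') (hJ u) (hJ u')
    fun j hj => by rw [huu' j hj]

end StableCompressionScheme

lemma MeasureTheory.Measure.pi_uniformOfFintype {ι γ : Type*} [Fintype ι] [DecidableEq ι]
    [Fintype γ] [Nonempty γ] [MeasurableSpace γ] [MeasurableSingletonClass γ] :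
    Measure.pi (fun _ : ι => (PMF.uniformOfFintype γ).toMeasure)
      = (PMF.uniformOfFintype (ι → γ)).toMeasure := by
  refine Measure.ext_of_singleton fun f => ?_
  rw [Measure.pi_singleton, PMF.toMeasure_apply_singleton _ _ (measurableSet_singleton _)]
  simp_rw [PMF.toMeasure_apply_singleton _ _ (measurableSet_singleton _),
    PMF.uniformOfFintype_apply]
  rw [prod_const, card_univ, Fintype.card_fun, Nat.cast_pow, ENNReal.inv_pow]

lemma condExp_ae_eq_condExp_of_stronglyMeasurable {Ω : Type*} {m m' m0 : MeasurableSpace Ω}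
    {μ : Measure Ω} [IsFiniteMeasure μ] (hm' : m' ≤ m) (hm : m ≤ m0) {f : Ω → ℝ}
    (hf : StronglyMeasurable[m'] (μ[f | m])) : μ[f | m] =ᵐ[μ] μ[f | m'] := by
  have h := condExp_condExp_of_le (f := f) (μ := μ) hm' hm
  rwa [condExp_of_stronglyMeasurable (hm'.trans hm) hf integrable_condExp] at h

def condProbVec {Ω α : Type*} [mΩ : MeasurableSpace Ω] [DecidableEq α] (μ : Measure Ω)
    (U : Ω → α) (G : MeasurableSpace Ω) : Ω → α → ℝ :=
  fun ω v => @cprob Ω α mΩ _ μ U v G ω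

lemma measurable_condProbVec {Ω α : Type*} {G m0 : MeasurableSpace Ω} [DecidableEq α]
    (μ : Measure Ω) (U : Ω → α) : Measurable[G] (condProbVec μ U G) := by
  let _ := G
  exact measurable_pi_lambda _ fun v => stronglyMeasurable_condExp.measurable

lemma condEnt_eq_condEnt_sup_comap_condProbVec {Ω α : Type*} {G₀ G m0 : MeasurableSpace Ω}
    [Fintype α] [DecidableEq α] {μ : Measure Ω} [IsFiniteMeasure μ] (U : Ω → α)
    (hG₀ : G₀ ≤ G) (hG : G ≤ m0) :
    condEnt μ U G = condEnt μ U (G₀ ⊔ MeasurableSpace.comap (condProbVec μ U G) inferInstance) := by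
  set q := condProbVec μ U G
  have hq : Measurable[G] q := measurable_condProbVec μ U
  have hq' : Measurable[G₀ ⊔ MeasurableSpace.comap q inferInstance] q :=
    (comap_measurable _).mono le_sup_right le_rfl
  have hae : ∀ᵐ ω ∂μ, ∀ v, cprob μ U v G ω
      = cprob μ U v (G₀ ⊔ MeasurableSpace.comap q inferInstance) ω := ae_all_iff.2 fun v =>
    condExp_ae_eq_condExp_of_stronglyMeasurable (sup_le hG₀ hq.comap_le) hG
      ((measurable_pi_apply v).comp hq').stronglyMeasurable
  exact integral_congr_ae (hae.mono fun ω h => by simp only [h])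

section UniformLabel

variable {Z α β : Type*} [MeasurableSpace Z] [MeasurableSpace α] [Fintype α] [MeasurableSpace β]
  [DecidableEq β]

lemma measurable_card_filter_eq [MeasurableEq β] {V : Z × α → β} (hV : Measurable V) :
    Measurable fun p : Z × β => (#{w | V (p.1, w) = p.2} : ℝ) := by
  simp only [card_filter, Nat.cast_sum, Nat.cast_ite, Nat.cast_one, Nat.cast_zero]
  exact Finset.measurable_sum _ fun w _ => Measurable.ite
    (measurableSet_eq_fun (hV.comp (measurable_fst.prodMk measurable_const)) measurable_snd)
    measurable_const measurable_const

variable [Nonempty α] {ν : Measure Z} [IsProbabilityMeasure ν]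

lemma integrable_log_fiberCard [MeasurableEq β] {V : Z × α → β} (hV : Measurable V) :
    Integrable (fun ω => Real.log (fiberCard (fun w => V (ω.1, w)) univ ω.2))
      (ν.prod (PMF.uniformOfFintype α).toMeasure) := by
  refine Integrable.of_bound
    (Real.measurable_log.comp ((measurable_card_filter_eq hV).comp
      (measurable_fst.prodMk hV))).aestronglyMeasurable
    (Real.log (Fintype.card α)) (ae_of_all _ fun ω => ?_)
  have h1 : (1 : ℝ) ≤ fiberCard (fun w => V (ω.1, w)) univ ω.2 := by
    exact_mod_cast one_le_fiberCard _ (mem_univ _)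
  rw [Real.norm_of_nonneg (Real.log_nonneg h1)]
  exact Real.log_le_log (by linarith) (by exact_mod_cast fiberCard_le_card _ _ _)

variable [MeasurableSingletonClass α]

lemma integral_uniformOfFintype (g : α → ℝ) :
    ∫ w, g w ∂(PMF.uniformOfFintype α).toMeasure = (Fintype.card α : ℝ)⁻¹ * ∑ w, g w := by
  simp [PMF.integral_eq_sum, PMF.uniformOfFintype_apply, mul_sum]

lemma integral_prod_uniformOfFintype {f : Z × α → ℝ}
    (hf : Integrable f (ν.prod (PMF.uniformOfFintype α).toMeasure)) :
    ∫ ω, f ω ∂(ν.prod (PMF.uniformOfFintype α).toMeasure)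
      = ∫ z, (Fintype.card α : ℝ)⁻¹ * ∑ w, f (z, w) ∂ν := by
  simp_rw [integral_prod _ hf, integral_uniformOfFintype]

theorem condExp_ite_snd_comap_sup_ae_eq [DecidableEq α] [MeasurableEq β] {V : Z × α → β}
    (hV : Measurable V) (u : α) :
    (ν.prod (PMF.uniformOfFintype α).toMeasure)[fun ω => if ω.2 = u then (1 : ℝ) else 0 |
        MeasurableSpace.comap (fun ω => ω.1) inferInstance ⊔ MeasurableSpace.comap V inferInstance]
      =ᵐ[ν.prod (PMF.uniformOfFintype α).toMeasure]
        fun ω => if V (ω.1, u) = V ω then (fiberCard (fun w => V (ω.1, w)) univ ω.2 : ℝ)⁻¹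
          else 0 := by
  rw [← MeasurableSpace.comap_prodMk]
  set μ := ν.prod (PMF.uniformOfFintype α).toMeasure
  set Φ : Z × α → Z × β := fun ω => (ω.1, V ω)
  have hΦ : Measurable Φ := measurable_fst.prodMk hV
  set ψ : Z × β → ℝ := fun p => if V (p.1, u) = p.2 then (#{w | V (p.1, w) = p.2} : ℝ)⁻¹ else 0
  have hψ : Measurable ψ := Measurable.ite
    (measurableSet_eq_fun (hV.comp (measurable_fst.prodMk measurable_const)) measurable_snd)
    (measurable_card_filter_eq hV).inv measurable_const
  have hψΦ : Integrable (ψ ∘ Φ) μ := by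
    refine Integrable.of_bound (hψ.comp hΦ).aestronglyMeasurable 1 (ae_of_all _ fun ω => ?_)
    simp only [Function.comp_apply, ψ]
    split_ifs
    · rw [norm_inv, Real.norm_natCast]
      exact inv_le_one_of_one_le₀ (by exact_mod_cast one_le_fiberCard _ (mem_univ ω.2))
    · simp
  have hf : Integrable (fun ω : Z × α => if ω.2 = u then (1 : ℝ) else 0) μ :=
    (integrable_const 1).mono' (Measurable.ite (measurable_snd (measurableSet_singleton u))
      measurable_const measurable_const).aestronglyMeasurable
      (ae_of_all _ fun ω => by split_ifs <;> simp)
  refine (ae_eq_condExp_of_forall_setIntegral_eq hΦ.comap_le hf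
    (fun s _ _ => hψΦ.integrableOn) ?_ (hψ.comp (comap_measurable Φ)).aestronglyMeasurable).symm
  rintro _ ⟨E, hE, rfl⟩ -
  rw [← integral_indicator (hΦ hE), ← integral_indicator (hΦ hE),
    integral_prod_uniformOfFintype (hψΦ.indicator (hΦ hE)),
    integral_prod_uniformOfFintype (hf.indicator (hΦ hE))]
  refine integral_congr_ae (ae_of_all _ fun z => congrArg _ ?_)
  have hind : ∀ (g : Z × α → ℝ) (w : α), (Φ ⁻¹' E).indicator g (z, w)
      = E.indicator 1 (z, V (z, w)) * g (z, w) := by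
    intro g w
    by_cases h : (z, V (z, w)) ∈ E
    · rw [Set.indicator_of_mem (show (z, w) ∈ Φ ⁻¹' E from h), Set.indicator_of_mem h,
        Pi.one_apply, one_mul]
    · rw [Set.indicator_of_notMem (show (z, w) ∉ Φ ⁻¹' E from h), Set.indicator_of_notMem h,
        zero_mul]
  simp only [hind]
  exact (sum_mul_ite_inv_fiberCard (fun w => V (z, w)) (fun b => E.indicator 1 (z, b)) u).trans
    (by simp)

theorem condEnt_snd_comap_sup [DecidableEq α] [MeasurableEq β] {V : Z × α → β}
    (hV : Measurable V) :
    condEnt (ν.prod (PMF.uniformOfFintype α).toMeasure) (fun ω => ω.2)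
        (MeasurableSpace.comap (fun ω => ω.1) inferInstance ⊔ MeasurableSpace.comap V inferInstance)
      = ∫ ω, Real.log (fiberCard (fun w => V (ω.1, w)) univ ω.2)
          ∂(ν.prod (PMF.uniformOfFintype α).toMeasure) := by
  refine integral_congr_ae ?_
  filter_upwards [ae_all_iff.2 fun v => condExp_ite_snd_comap_sup_ae_eq hV v] with ω h
  simp only [cprob, h, ← neg_mul]
  exact sum_negMulLog_ite_inv_fiberCard (fun w => V (ω.1, w)) ω.2

theorem condEnt_snd_comap_fst [DecidableEq α] :
    condEnt (ν.prod (PMF.uniformOfFintype α).toMeasure) (fun ω => ω.2)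
        (MeasurableSpace.comap (fun ω => ω.1) inferInstance)
      = Real.log (Fintype.card α) := by
  have h : MeasurableSpace.comap (fun ω : Z × α => ω.1) inferInstance
      = MeasurableSpace.comap (fun ω : Z × α => ω.1) inferInstance
        ⊔ MeasurableSpace.comap (fun _ : Z × α => ()) inferInstance := by
    rw [MeasurableSpace.comap_const, sup_bot_eq]
  rw [h, condEnt_snd_comap_sup measurable_const]
  simp [fiberCard]

theorem condMI_snd_le {γ : Type*} [MeasurableSpace γ] [DecidableEq γ] [DecidableEq α]
    {W : Z × α → γ} (hW : Measurable W) {c : ℝ}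
    (hc : ∀ᵐ z ∂ν, c * Fintype.card α ≤ ∑ w, Real.log (fiberCard (fun w' => W (z, w')) univ w)) :
    condMI (ν.prod (PMF.uniformOfFintype α).toMeasure) (fun ω => ω.2) W inferInstance
        (fun ω => ω.1) inferInstance
      ≤ Real.log (Fintype.card α) - c := by
  classical
  set μ := ν.prod (PMF.uniformOfFintype α).toMeasure
  have hG : MeasurableSpace.comap (fun ω : Z × α => ω.1) inferInstance
      ⊔ MeasurableSpace.comap W inferInstance ≤ (inferInstance : MeasurableSpace (Z × α)) :=
    sup_le measurable_fst.comap_le hW.comap_le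
  rw [condMI, condEnt_snd_comap_fst, condEnt_eq_condEnt_sup_comap_condProbVec _ le_sup_left hG]
  set q := condProbVec μ (fun ω => ω.2) (MeasurableSpace.comap (fun ω : Z × α => ω.1) inferInstance
      ⊔ MeasurableSpace.comap W inferInstance)
  have hq : Measurable q := (measurable_condProbVec μ _).mono hG le_rfl
  have hfac : ∀ z w w', W (z, w) = W (z, w') → q (z, w) = q (z, w') := fun z w w' h =>
    ((measurable_condProbVec μ _).mono (MeasurableSpace.comap_prodMk _ W).ge le_rfl).factorsThrough
      (Prod.ext rfl h)
  have hint := integrable_log_fiberCard (ν := ν) hq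
  rw [condEnt_snd_comap_sup hq, integral_prod_uniformOfFintype hint, sub_le_sub_iff_left]
  have hcard : (0 : ℝ) < Fintype.card α := by exact_mod_cast Fintype.card_pos
  calc c = ∫ _z, c ∂ν := by simp
    _ ≤ _ := by
      refine integral_mono_ae (integrable_const c) ?_ (hc.mono fun z hz => ?_)
      · simpa only [integral_uniformOfFintype] using hint.integral_prod_left
      · rw [le_inv_mul_iff₀ hcard, mul_comm]
        exact hz.trans (sum_le_sum fun w _ =>
          Real.log_le_log (by exact_mod_cast one_le_fiberCard _ (mem_univ _))
            (by exact_mod_cast fiberCard_le_fiberCard (hfac z) univ w))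

end UniformLabel

lemma measurable_trainOf {X : Type*} [MeasurableSpace X] {n : ℕ} :
    Measurable (trainOf : SupOmega X n → Fin n → X × Bool) :=
  measurable_pi_lambda _ fun j =>
    measurable_from_prod_countable_left fun u => measurable_pi_apply (u j, j)

theorem stmt2 {X : Type*} [MeasurableSpace X]
    (H : Set (X → Bool)) (k : ℕ)
    (κ : Multiset (X × Bool) → Multiset (X × Bool))
    (ρ : Multiset (X × Bool) → X → Bool)
    (hscheme : StableCompressionScheme H k κ ρ)
    (n : ℕ) (hn : k ≤ n)
    (hmeas : Measurable fun s : Fin n → X × Bool => ρ (κ (toMultiset s)))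
    (D : Measure (X × Bool)) [IsProbabilityMeasure D]
    (hreal : ∃ h ∈ H, D {z : X × Bool | h z.1 ≠ z.2} = 0) :
    condMI (supMeasure n D) (fun ω => ω.2)
      (fun ω : SupOmega X n => ρ (κ (toMultiset (trainOf ω)))) inferInstance
      (fun ω : SupOmega X n => ω.1) inferInstance
      ≤ 2 * k * Real.log 2 := by
  classical
  obtain ⟨h, hH, hD⟩ := hreal
  have hrealizable : ∀ᵐ z ∂(Measure.pi fun _ : Fin 2 × Fin n => D), ∀ c, h (z c).1 = (z c).2 :=
    ae_all_iff.2 fun c => (measurePreserving_eval (fun _ => D) c).quasiMeasurePreserving.ae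
      ((ae_iff (p := fun x : X × Bool => h x.1 = x.2)).2 hD)
  have hfibers : ∀ᵐ z ∂(Measure.pi fun _ : Fin 2 × Fin n => D),
      ((n : ℝ) - 2 * k) * Real.log 2 * Fintype.card (Fin n → Fin 2)
        ≤ ∑ u, Real.log (fiberCard
          (fun u' : Fin n → Fin 2 => ρ (κ (toMultiset fun j => z (u' j, j)))) univ u) := by
    filter_upwards [hrealizable] with z hz
    obtain ⟨J, hJk, hJ⟩ := hscheme.exists_compressionIndices hn ⟨h, hH, hz⟩
    simpa [Fintype.card_fun, mul_right_comm] using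
      card_sub_two_mul_log_two_le_sum_log_fiberCard _ J hJk hJ
  rw [supMeasure, Measure.pi_uniformOfFintype]
  refine (condMI_snd_le (hmeas.comp measurable_trainOf) hfibers).trans_eq ?_
  simp [Real.log_pow]
  ring

end
end

section
/- Let n ≥ 1, let Z be a set, fix z = (z_1, …, z_{2n}) ∈ Z^{2n}, and let f : Z^n × Z → ℝ be invariant under permutations of its first argument. Let π be uniformly distributed on the set of bijections from {1,…,2n} to {0,1} × {1,…,n}, and let U = (U_1,…,U_n) be i.i.d. uniform on {0,1}, independent of π. Writing z^π_{i,j} = z_{π^{-1}(i,j)}, one has E[ f( (z^π_{U_1,1}, …, z^π_{U_n,n}); z^π_{1−U_1,1} ) ] = E_{J} [ (1/(n+1)) Σ_{j ∈ J} f( z_{J∖{j}}; z_j ) ], where J is uniformly distributed over the (n+1)-element subsets of {1,…,2n} and z_{J∖{j}} denotes the n-tuple of entries of z indexed by J∖{j} (in any fixed order, by permutation invariance of f). -/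
/-
Flipping the selectors `U` is a bijection of the set of bijections `π`, so the average over `U`
is trivial and one may take `U = 0`. The summand then depends only on the pointed set
`(J, k) = (π⁻¹({0} × [n] ∪ {(1, 1)}), π⁻¹(1, 1))`, by the permutation invariance of `f`.
The map `π ↦ (J, k)` is equivariant for the symmetric group of `{1, …, 2n}`, which acts
transitively on pointed `(n + 1)`-subsets; hence all its fibres have the same size, and the
uniform distribution of `π` is pushed forward to the uniform distribution on pointed subsets.
-/

noncomputable section

/-- the n-tuple of the entries of `z` indexed by a finset `s` (in increasing order);
returns the constant `dflt` tuple when `s` does not have exactly `n` elements. -/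
def tupleN {Z : Type*} {m n : ℕ} (z : Fin m → Z) (dflt : Z) (s : Finset (Fin m)) :
    Fin n → Z :=
  if h : s.card = n then fun i => z ((s.orderIsoOfFin h) i : s) else fun _ => dflt

open Finset
open scoped Pointwise

section Fibers

variable {X T : Type*} [Fintype X] [DecidableEq T]

theorem sum_comp_div_card_eq_of_card_fiber_eq {K : Type*} [Semifield K] [CharZero K]
    [Nonempty X] (Φ : X → T) {S : Finset T} (hΦ : ∀ x, Φ x ∈ S)
    (hfib : ∀ t ∈ S, ∀ t' ∈ S, #{x | Φ x = t} = #{x | Φ x = t'}) (h : T → K) :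
    (∑ x, h (Φ x)) / Fintype.card X = (∑ t ∈ S, h t) / #S := by
  obtain ⟨x₀⟩ := ‹Nonempty X›
  set c := #{x | Φ x = Φ x₀}
  have hc : ∀ t ∈ S, #{x | Φ x = t} = c := fun t ht => hfib t ht _ (hΦ x₀)
  have hsum : ∑ x, h (Φ x) = c * ∑ t ∈ S, h t := by
    rw [← sum_fiberwise_of_maps_to (fun x _ => hΦ x), mul_sum]
    refine sum_congr rfl fun t ht => ?_
    rw [sum_congr rfl fun x hx => congrArg h (mem_filter.mp hx).2, sum_const, hc t ht,
      nsmul_eq_mul]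
  have hcard : Fintype.card X = c * #S := by
    rw [← card_univ, card_eq_sum_card_fiberwise fun x _ => hΦ x, sum_congr rfl hc, sum_const,
      smul_eq_mul, mul_comm]
  have hc0 : (c : K) ≠ 0 := by
    have : 0 < Fintype.card X := Fintype.card_pos
    rw [hcard] at this
    exact_mod_cast (Nat.pos_of_mul_pos_right this).ne'
  rw [hsum, hcard, Nat.cast_mul, mul_div_mul_left _ _ hc0]

theorem card_fiber_smul_eq {G : Type*} [Group G] [MulAction G T] (Φ : X → T)
    (lift : G → X → X) (hlift : ∀ g, Function.Injective (lift g))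
    (hΦ : ∀ g x, Φ (lift g x) = g • Φ x) (g : G) (t : T) :
    #{x | Φ x = g • t} = #{x | Φ x = t} := by
  apply le_antisymm
  · refine card_le_card_of_injOn (lift g⁻¹) (fun x hx => ?_) (hlift _).injOn
    simp_all
  · refine card_le_card_of_injOn (lift g) (fun x hx => ?_) (hlift _).injOn
    simp_all

end Fibers

theorem Equiv.Perm.exists_smul_finset_eq_and_apply_eq {α : Type*} [DecidableEq α] [Finite α]
    {s t : Finset α} (hst : #s = #t) {a b : α} (ha : a ∈ s) (hb : b ∈ t) :
    ∃ τ : Equiv.Perm α, τ • s = t ∧ τ a = b := by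
  let e₀ := equivOfCardEq hst
  let e : s ≃ t := e₀.trans (Equiv.swap (e₀ ⟨a, ha⟩) ⟨b, hb⟩)
  refine ⟨e.extendSubtype, ?_, ?_⟩
  · rw [smul_finset_def]
    refine eq_of_subset_of_card_le (fun y hy => ?_) ?_
    · obtain ⟨x, hx, rfl⟩ := mem_image.mp hy
      exact e.extendSubtype_mem x hx
    · exact hst ▸ (card_image_of_injective s (MulAction.injective e.extendSubtype)).ge
  · simp [e, Equiv.extendSubtype_apply_of_mem e a ha]

section PointedSubsets

variable {α β : Type*} [DecidableEq α] [Fintype α]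

variable (α) in
def pointedSubsets (k : ℕ) : Finset (Finset α × α) :=
  {p ∈ powersetCard k univ ×ˢ univ | p.2 ∈ p.1}

theorem mem_pointedSubsets {k : ℕ} {p : Finset α × α} :
    p ∈ pointedSubsets α k ↔ #p.1 = k ∧ p.2 ∈ p.1 := by
  simp [pointedSubsets]

theorem sum_pointedSubsets {M : Type*} [AddCommMonoid M] (k : ℕ) (h : Finset α × α → M) :
    ∑ p ∈ pointedSubsets α k, h p = ∑ J ∈ powersetCard k univ, ∑ a ∈ J, h (J, a) :=
  sum_finset_product _ _ _ fun p => by simp [pointedSubsets]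

theorem card_pointedSubsets (k : ℕ) :
    #(pointedSubsets α k) = (Fintype.card α).choose k * k := by
  rw [card_eq_sum_ones, sum_pointedSubsets, sum_congr rfl fun J hJ => ?_, sum_const,
    card_powersetCard, card_univ, smul_eq_mul]
  rw [← card_eq_sum_ones, (mem_powersetCard.mp hJ).2]

def pointedImage (A : Finset β) (b : β) (σ : α ≃ β) : Finset α × α :=
  (A.image σ.symm, σ.symm b)

theorem pointedImage_mem_pointedSubsets {A : Finset β} {b : β} (hb : b ∈ A) (σ : α ≃ β) :
    pointedImage A b σ ∈ pointedSubsets α #A :=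
  mem_pointedSubsets.mpr ⟨card_image_of_injective _ σ.symm.injective, mem_image_of_mem _ hb⟩

theorem card_fiber_pointedImage_eq [Fintype β] [DecidableEq β] (A : Finset β) (b : β)
    {p q : Finset α × α} (hp : p ∈ pointedSubsets α #A) (hq : q ∈ pointedSubsets α #A) :
    #{σ : α ≃ β | pointedImage A b σ = p} = #{σ : α ≃ β | pointedImage A b σ = q} := by
  rw [mem_pointedSubsets] at hp hq
  obtain ⟨τ, hτs, hτa⟩ :=
    Equiv.Perm.exists_smul_finset_eq_and_apply_eq (hp.1.trans hq.1.symm) hp.2 hq.2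
  rw [← show τ • p = q from Prod.ext hτs hτa]
  refine (card_fiber_smul_eq _ (fun (τ : Equiv.Perm α) (σ : α ≃ β) => τ.symm.trans σ)
    (fun τ => ?_) (fun τ σ => ?_) τ p).symm
  · exact fun σ σ' h => by simpa [← Equiv.trans_assoc] using congrArg τ.trans h
  · simp [pointedImage, smul_finset_def, image_image, Function.comp_def]

end PointedSubsets

theorem sum_equiv_selected_eq_sum_equiv_zero_selected {α M : Type*} [Fintype α]
    [DecidableEq α] [AddCommMonoid M] {n : ℕ} (H : (Fin n → α) → α → M) (u : Fin n → Fin 2)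
    (j₀ : Fin n) :
    ∑ σ : α ≃ Fin 2 × Fin n, H (fun j => σ.symm (u j, j)) (σ.symm (1 - u j₀, j₀)) =
      ∑ σ : α ≃ Fin 2 × Fin n, H (fun j => σ.symm (0, j)) (σ.symm (1, j₀)) := by
  let τ : Equiv.Perm (Fin 2 × Fin n) := Equiv.prodCongrLeft fun j => Equiv.addRight (u j)
  refine Fintype.sum_equiv ((Equiv.refl α).equivCongr τ.symm) _ _ fun σ => ?_
  have h : ∀ a : Fin 2, 1 - a = 1 + a := by decide
  simp [τ, h]

theorem exists_perm_tupleN_comp_eq {Z : Type*} {m n : ℕ} (z : Fin m → Z) (d : Z)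
    {ι : Fin n → Fin m} (hι : Function.Injective ι) {s : Finset (Fin m)}
    (hs : univ.image ι = s) :
    ∃ π : Equiv.Perm (Fin n), tupleN z d s ∘ π = z ∘ ι := by
  have hcard : #s = n := by rw [← hs, card_image_of_injective _ hι, card_fin]
  let e : Fin n ≃ s :=
    Equiv.ofBijective (fun j => ⟨ι j, hs ▸ mem_image_of_mem ι (mem_univ j)⟩)
    ((Fintype.bijective_iff_injective_and_card _).mpr
      ⟨fun i j h => hι (congrArg Subtype.val h), by simp [hcard]⟩)
  refine ⟨e.trans (s.orderIsoOfFin hcard).toEquiv.symm, funext fun j => ?_⟩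
  simp only [Function.comp_apply, tupleN, dif_pos hcard, Equiv.trans_apply]
  exact congrArg (fun x : s => z x) ((s.orderIsoOfFin hcard).apply_symm_apply (e j))

def rowZeroInsert {n : ℕ} (j₀ : Fin n) : Finset (Fin 2 × Fin n) :=
  insert (1, j₀) (univ.image (Prod.mk 0))

theorem card_rowZeroInsert {n : ℕ} (j₀ : Fin n) : #(rowZeroInsert j₀) = n + 1 := by
  rw [rowZeroInsert, card_insert_of_notMem (by simp),
    card_image_of_injective _ (Prod.mk_right_injective 0), card_fin]

theorem apply_zeroSelected_eq_apply_tupleN_pointedImage {Z : Type*} {m n : ℕ}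
    (f : (Fin n → Z) → Z → ℝ)
    (hf : ∀ (π : Equiv.Perm (Fin n)) w w', f (w ∘ π) w' = f w w')
    (z : Fin m → Z) (d : Z) (σ : Fin m ≃ Fin 2 × Fin n) (j₀ : Fin n) :
    f (fun j => z (σ.symm (0, j))) (z (σ.symm (1, j₀))) =
      f (tupleN z d ((pointedImage (rowZeroInsert j₀) (1, j₀) σ).1.erase (σ.symm (1, j₀))))
        (z (σ.symm (1, j₀))) := by
  have herase : ((rowZeroInsert j₀).image σ.symm).erase (σ.symm (1, j₀)) =
      univ.image fun j => σ.symm (0, j) := by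
    rw [rowZeroInsert, image_insert, erase_insert (by simp [image_image]), image_image]
    rfl
  obtain ⟨π, hπ⟩ :=
    exists_perm_tupleN_comp_eq z d (σ.symm.injective.comp (Prod.mk_right_injective 0))
      herase.symm
  symm
  rw [pointedImage, ← hf π, hπ]
  rfl

theorem stmt14 {Z : Type*} (n : ℕ) (hn : 1 ≤ n) (z : Fin (2 * n) → Z)
    (f : (Fin n → Z) → Z → ℝ)
    -- f is invariant under permutations of its first argument
    (hf : ∀ (σ : Equiv.Perm (Fin n)) (w : Fin n → Z) (w' : Z), f (w ∘ σ) w' = f w w') :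
    (∑ σ : Fin (2 * n) ≃ (Fin 2 × Fin n), ∑ u : Fin n → Fin 2,
          f (fun j => z (σ.symm (u j, j)))
            (z (σ.symm (1 - u ⟨0, hn⟩, ⟨0, hn⟩)))) /
        ((Fintype.card (Fin (2 * n) ≃ (Fin 2 × Fin n)) : ℝ) * 2 ^ n)
      = (∑ J ∈ Finset.powersetCard (n + 1) (Finset.univ : Finset (Fin (2 * n))),
            (1 / ((n : ℝ) + 1)) * ∑ j ∈ J, f (tupleN z (z ⟨0, by omega⟩) (J.erase j)) (z j)) /
          ((2 * n).choose (n + 1) : ℝ) := by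
  classical
  set j₀ : Fin n := ⟨0, hn⟩
  set Φ := pointedImage (α := Fin (2 * n)) (rowZeroInsert j₀) (1, j₀)
  set F : Finset (Fin (2 * n)) × Fin (2 * n) → ℝ :=
    fun p => f (tupleN z (z ⟨0, by omega⟩) (p.1.erase p.2)) (z p.2)
  have hselect : ∑ σ : Fin (2 * n) ≃ Fin 2 × Fin n, ∑ u : Fin n → Fin 2,
      f (fun j => z (σ.symm (u j, j))) (z (σ.symm (1 - u j₀, j₀))) =
        2 ^ n * ∑ σ, F (Φ σ) := by
    rw [sum_comm]
    calc _ = ∑ _u : Fin n → Fin 2, ∑ σ, F (Φ σ) := sum_congr rfl fun u _ =>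
          (sum_equiv_selected_eq_sum_equiv_zero_selected
            (fun w a => f (fun j => z (w j)) (z a)) u j₀).trans
          (sum_congr rfl fun σ _ =>
            apply_zeroSelected_eq_apply_tupleN_pointedImage f hf z _ σ j₀)
      _ = _ := by simp
  have : Nonempty (Fin (2 * n) ≃ Fin 2 × Fin n) := ⟨finProdFinEquiv.symm⟩
  have havg := sum_comp_div_card_eq_of_card_fiber_eq Φ
    (pointedImage_mem_pointedSubsets (mem_insert_self _ _))
    (fun _ hp _ hq => card_fiber_pointedImage_eq _ _ hp hq) F
  rw [hselect, mul_comm _ ((2 : ℝ) ^ n), mul_div_mul_left _ _ (by positivity), havg,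
    sum_pointedSubsets, card_pointedSubsets, card_rowZeroInsert, ← mul_sum, Fintype.card_fin]
  push_cast
  field_simp
  rfl

end
end

section
/- Let M, m, k be positive integers with 1 ≤ m ≤ M, and let X_1, …, X_k be i.i.d. uniform on {1, …, M}. If k ≤ (M/2) · log(M/m), then P( |{1,…,M} ∖ {X_1,…,X_k}| ≥ m ) ≥ 1/2; that is, with probability at least 1/2 at least m elements of {1,…,M} do not appear among the k samples. -/
/-!
Let `U` be the number of values missed by the `k` samples and `p = (1 - 1/M)^k` the probability
that a given value is missed. Counting missed values and ordered pairs of distinct missed values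
gives `E U = M p` and `Var U ≤ M p (1 - p)`, because `(1 - 2/M)^k ≤ p^2`. Chebyshev's inequality
bounds `P(U < m)` by `M p (1 - p) / (M p - m + 1)^2`, which is at most `1/2` once
`m ≤ p (2 + (M - 2) p)`: then `d = M p - m ≥ (M - 2) p (1 - p)`, and
`(d + 1)^2 ≥ 2 d + 1 ≥ 2 M p (1 - p)` since `4 p (1 - p) ≤ 1`. Finally `p ≥ exp(-k/(M-1)) ≥ t`
for `t = exp(-c)`, `c = M log(M/m) / (2(M-1))`, and convexity of `exp` gives
`m / M = t · exp(-(M-2)/M · c) ≤ t (2 + (M - 2) t) / M`.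
-/

open Finset Real

lemma Finset.sum_card_eq_sum_card_filter_mem {β γ : Type*} [Fintype β] [Fintype γ]
    [DecidableEq γ] (S : β → Finset γ) : ∑ x, #(S x) = ∑ a, #{x | a ∈ S x} := by
  simpa [bipartiteAbove, bipartiteBelow] using
    sum_card_bipartiteAbove_eq_sum_card_bipartiteBelow (s := univ) (t := univ) (fun x a => a ∈ S x)

lemma Finset.card_filter_le_sub_mul_sq_le {β : Type*} (s : Finset β) (f : β → ℝ) (μ : ℝ)
    {a : ℝ} (ha : 0 ≤ a) : #{x ∈ s | f x ≤ μ - a} * a ^ 2 ≤ ∑ x ∈ s, (f x - μ) ^ 2 :=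
  calc #{x ∈ s | f x ≤ μ - a} * a ^ 2 = ∑ _x ∈ s with f _x ≤ μ - a, a ^ 2 := by
        rw [sum_const, nsmul_eq_mul]
    _ ≤ ∑ x ∈ s with f x ≤ μ - a, (f x - μ) ^ 2 := sum_le_sum fun x hx => by
        have := (mem_filter.1 hx).2
        nlinarith
    _ ≤ ∑ x ∈ s, (f x - μ) ^ 2 :=
        sum_le_sum_of_subset_of_nonneg (filter_subset _ _) fun _ _ _ => sq_nonneg _

lemma Nat.sub_two_pow_mul_pow_le_sq (n k : ℕ) : (n - 2) ^ k * n ^ k ≤ ((n - 1) ^ k) ^ 2 := by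
  rw [← mul_pow, ← pow_mul, mul_comm k, pow_mul]
  exact Nat.pow_le_pow_left (by rcases n with _ | _ | n <;> simp [sq]; nlinarith) k

lemma Real.exp_mul_le_one_sub_add_mul_exp {β : ℝ} (hβ₀ : 0 ≤ β) (hβ₁ : β ≤ 1) (y : ℝ) :
    exp (β * y) ≤ 1 - β + β * exp y := by
  simpa using convexOn_exp.2 (Set.mem_univ 0) (Set.mem_univ y) (sub_nonneg.2 hβ₁) hβ₀ (by ring)

noncomputable def missProb (n k : ℕ) : ℝ := (1 - (n : ℝ)⁻¹) ^ k

lemma missProb_nonneg (n k : ℕ) : 0 ≤ missProb n k :=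
  pow_nonneg (sub_nonneg.2 n.cast_inv_le_one) k

lemma missProb_le_one (n k : ℕ) : missProb n k ≤ 1 :=
  pow_le_one₀ (sub_nonneg.2 n.cast_inv_le_one) (sub_le_self _ (inv_nonneg.2 n.cast_nonneg))

lemma pow_mul_missProb {n : ℕ} (hn : 1 ≤ n) (k : ℕ) :
    (n : ℝ) ^ k * missProb n k = ((n - 1 : ℕ) : ℝ) ^ k := by
  rw [missProb, ← mul_pow, mul_one_sub, mul_inv_cancel₀ (by exact_mod_cast (by omega : n ≠ 0)),
    Nat.cast_sub hn, Nat.cast_one]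

lemma exp_neg_div_le_missProb {n : ℕ} (hn : 1 < n) (k : ℕ) :
    exp (-(k / (n - 1 : ℝ))) ≤ missProb n k := by
  have hn' : (0 : ℝ) < n - 1 := by simp [hn]
  have h : exp (-(1 / (n - 1 : ℝ))) ≤ 1 - (n : ℝ)⁻¹ := by
    rw [exp_neg, inv_le_comm₀ (exp_pos _) (by field_simp; linarith)]
    calc ((1 : ℝ) - (n : ℝ)⁻¹)⁻¹ = 1 / (n - 1 : ℝ) + 1 := by field_simp; ring
      _ ≤ exp (1 / (n - 1 : ℝ)) := add_one_le_exp _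
  calc exp (-(k / (n - 1 : ℝ))) = exp (-(1 / (n - 1 : ℝ))) ^ k := by
        rw [← exp_nat_mul]; ring_nf
    _ ≤ missProb n k := pow_le_pow_left₀ (exp_pos _).le h k

lemma mul_exp_neg_le_exp_neg_mul {M : ℝ} (hM : 2 ≤ M) (c : ℝ) :
    M * exp (-(2 * (M - 1) / M * c)) ≤ exp (-c) * (2 + (M - 2) * exp (-c)) := by
  have hM₀ : 0 < M := by linarith
  have hβ₀ : 0 ≤ (M - 2) / M := div_nonneg (by linarith) hM₀.le
  have hβ₁ : (M - 2) / M ≤ 1 := by rw [div_le_one hM₀]; linarith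
  have hsplit : exp (-(2 * (M - 1) / M * c)) = exp (-c) * exp ((M - 2) / M * -c) := by
    rw [← exp_add]; congr 1; field_simp; ring
  calc M * exp (-(2 * (M - 1) / M * c))
      ≤ M * (exp (-c) * (1 - (M - 2) / M + (M - 2) / M * exp (-c))) := by
        rw [hsplit]; gcongr; exact exp_mul_le_one_sub_add_mul_exp hβ₀ hβ₁ _
    _ = exp (-c) * (2 + (M - 2) * exp (-c)) := by field_simp; ring

lemma cast_le_missProb_mul_two_add {M m k : ℕ} (hm : 0 < m) (hmM : m < M)
    (hk : (k : ℝ) ≤ M / 2 * log (M / m)) :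
    (m : ℝ) ≤ missProb M k * (2 + (M - 2) * missProb M k) := by
  have hM : (2 : ℝ) ≤ M := by exact_mod_cast (by omega : 2 ≤ M)
  have hm' : (0 : ℝ) < m := by exact_mod_cast hm
  have hM₁ : (0 : ℝ) < M - 1 := by linarith
  set c := M / 2 * log (M / m) / (M - 1)
  have hct : exp (-c) ≤ missProb M k :=
    (exp_le_exp.2 (neg_le_neg (div_le_div_of_nonneg_right hk hM₁.le))).trans
      (exp_neg_div_le_missProb (by omega) k)
  have hmc : (m : ℝ) = M * exp (-(2 * (M - 1) / M * c)) := by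
    have : 2 * (M - 1) / M * c = log (M / m) := by simp only [c]; field_simp
    rw [this, exp_neg, exp_log (by positivity)]; field_simp
  calc (m : ℝ) ≤ exp (-c) * (2 + (M - 2) * exp (-c)) := hmc ▸ mul_exp_neg_le_exp_neg_mul hM c
    _ ≤ missProb M k * (2 + (M - 2) * missProb M k) := by
      gcongr; linarith [missProb_nonneg M k]

lemma two_mul_mul_one_sub_le_sq {n m s : ℝ} (h : m ≤ s * (2 + (n - 2) * s)) :
    2 * (n * s) * (1 - s) ≤ (n * s - m + 1) ^ 2 := by
  have hd : (n - 2) * (s * (1 - s)) ≤ n * s - m := by nlinarith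
  have hx : s * (1 - s) ≤ 1 / 4 := by nlinarith [sq_nonneg (2 * s - 1)]
  nlinarith [sq_nonneg (n * s - m)]

section Unseen

variable {ι α : Type*} [Fintype ι] [DecidableEq ι] [Fintype α] [DecidableEq α]

def unseen (x : ι → α) : Finset α := univ \ image x univ

omit [DecidableEq ι] in
lemma mem_unseen {x : ι → α} {a : α} : a ∈ unseen x ↔ ∀ i, x i ≠ a := by
  simp [unseen]

lemma card_filter_forall_notMem (T : Finset α) :
    #{x : ι → α | ∀ i, x i ∉ T} = (Fintype.card α - #T) ^ Fintype.card ι := by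
  have : ({x : ι → α | ∀ i, x i ∉ T} : Finset _) = Fintype.piFinset fun _ => Tᶜ := by
    ext x; simp
  rw [this, Fintype.card_piFinset, prod_const, card_compl, card_univ]

lemma sum_card_unseen :
    ∑ x : ι → α, #(unseen x) = Fintype.card α * (Fintype.card α - 1) ^ Fintype.card ι := by
  rw [sum_card_eq_sum_card_filter_mem]
  have (a : α) : #{x : ι → α | a ∈ unseen x} = (Fintype.card α - 1) ^ Fintype.card ι := by
    simpa [mem_unseen, eq_comm] using card_filter_forall_notMem (ι := ι) {a}
  simp [this]

lemma sum_card_offDiag_unseen :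
    ∑ x : ι → α, #(unseen x).offDiag =
      Fintype.card α * (Fintype.card α - 1) * (Fintype.card α - 2) ^ Fintype.card ι := by
  rw [sum_card_eq_sum_card_filter_mem]
  have (p : α × α) : #{x : ι → α | p ∈ (unseen x).offDiag} =
      if p ∈ (univ : Finset α).offDiag then (Fintype.card α - 2) ^ Fintype.card ι else 0 := by
    split_ifs with hp
    · have hp : p.1 ≠ p.2 := by simpa using hp
      convert card_filter_forall_notMem (ι := ι) {p.1, p.2} using 3
      · simp [mem_unseen, hp, eq_comm, forall_and]
      · rw [card_pair hp]
    · simp_all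
  rw [sum_congr rfl fun p _ => this p, sum_ite_mem, univ_inter, sum_const, offDiag_card,
    card_univ, smul_eq_mul, Nat.mul_sub_one]

lemma sum_sq_card_unseen :
    ∑ x : ι → α, #(unseen x) ^ 2 = Fintype.card α * (Fintype.card α - 1) ^ Fintype.card ι
      + Fintype.card α * (Fintype.card α - 1) * (Fintype.card α - 2) ^ Fintype.card ι := by
  have (s : Finset α) : #s ^ 2 = #s + #s.offDiag := by
    rw [offDiag_card, sq, Nat.add_sub_cancel' (Nat.le_mul_self _)]
  simp_rw [this, sum_add_distrib, sum_card_unseen, sum_card_offDiag_unseen]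

lemma sum_sq_card_unseen_sub_le [Nonempty α] :
    ∑ x : ι → α,
        ((#(unseen x) : ℝ) - Fintype.card α * missProb (Fintype.card α) (Fintype.card ι)) ^ 2
      ≤ Fintype.card (ι → α) * (Fintype.card α * missProb (Fintype.card α) (Fintype.card ι)
        * (1 - missProb (Fintype.card α) (Fintype.card ι))) := by
  set n := Fintype.card α with hn_def
  set k := Fintype.card ι with hk_def
  set p := missProb n k
  have hn : 1 ≤ n := Fintype.card_pos
  have hN : (Fintype.card (ι → α) : ℝ) = (n : ℝ) ^ k := by simp [n, k]
  have hp : ((n - 1 : ℕ) : ℝ) ^ k = n ^ k * p := (pow_mul_missProb hn k).symm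
  have hB : ((n - 2 : ℕ) : ℝ) ^ k ≤ n ^ k * p ^ 2 := by
    have h := (Nat.cast_le (α := ℝ)).2 (Nat.sub_two_pow_mul_pow_le_sq n k)
    simp only [Nat.cast_mul, Nat.cast_pow] at h
    rw [hp] at h
    exact le_of_mul_le_mul_right (h.trans_eq (by ring)) (by positivity)
  have hsum : ∑ x : ι → α, (#(unseen x) : ℝ) = n ^ k * (n * p) := by
    rw [← Nat.cast_sum, sum_card_unseen, ← hn_def, ← hk_def]
    push_cast [hp]; ring
  have hsq : ∑ x : ι → α, (#(unseen x) : ℝ) ^ 2 ≤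
      n ^ k * (n * p) + n * (n - 1) * (n ^ k * p ^ 2) := by
    have hcast : ∑ x : ι → α, (#(unseen x) : ℝ) ^ 2 =
        ((∑ x : ι → α, #(unseen x) ^ 2 : ℕ) : ℝ) := by
      push_cast; rfl
    have hn1 : (0 : ℝ) ≤ n * (n - 1) :=
      mul_nonneg (by positivity) (sub_nonneg.2 (by exact_mod_cast hn))
    rw [hcast, sum_sq_card_unseen, ← hn_def, ← hk_def]
    simp only [Nat.cast_add, Nat.cast_mul, Nat.cast_pow, hp]
    rw [Nat.cast_sub hn, Nat.cast_one]
    nlinarith [mul_le_mul_of_nonneg_left hB hn1]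
  simp_rw [sub_sq, sum_add_distrib, sum_sub_distrib, ← sum_mul, ← mul_sum, hsum, sum_const,
    card_univ, nsmul_eq_mul, hN]
  nlinarith [hsq]

lemma card_le_two_mul_card_filter_le_card_unseen [Nonempty α] {m : ℕ}
    (hm : m ≤ Fintype.card α * missProb (Fintype.card α) (Fintype.card ι))
    (h : 2 * (Fintype.card α * missProb (Fintype.card α) (Fintype.card ι))
        * (1 - missProb (Fintype.card α) (Fintype.card ι))
      ≤ (Fintype.card α * missProb (Fintype.card α) (Fintype.card ι) - m + 1) ^ 2) :
    Fintype.card (ι → α) ≤ 2 * #{x : ι → α | m ≤ #(unseen x)} := by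
  set μ := Fintype.card α * missProb (Fintype.card α) (Fintype.card ι)
  set N := Fintype.card (ι → α)
  have ha : (0 : ℝ) < μ - m + 1 := by linarith
  have hbad : #{x : ι → α | ¬ m ≤ #(unseen x)} =
      #{x : ι → α | (#(unseen x) : ℝ) ≤ μ - (μ - m + 1)} := by
    refine congrArg card (filter_congr fun x _ => ?_)
    rw [show μ - (μ - m + 1) = (m : ℝ) - 1 by ring, le_sub_iff_add_le, not_le,
      Nat.lt_iff_add_one_le]
    exact_mod_cast Iff.rfl
  have hcheb := (card_filter_le_sub_mul_sq_le univ (fun x : ι → α => (#(unseen x) : ℝ)) μ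
    ha.le).trans sum_sq_card_unseen_sub_le
  rw [← hbad] at hcheb
  have h2 : 2 * (#{x : ι → α | ¬ m ≤ #(unseen x)} : ℝ) ≤ N :=
    le_of_mul_le_mul_right (by nlinarith [h, hcheb]) (pow_pos ha 2)
  have hsplit := card_filter_add_card_filter_not (s := univ) (fun x : ι → α => m ≤ #(unseen x))
  rw [card_univ] at hsplit
  have : 2 * #{x : ι → α | ¬ m ≤ #(unseen x)} ≤ N := by exact_mod_cast h2
  omega

end Unseen

theorem stmt15_general (M m k : ℕ) (hm : 1 ≤ m) (hk : 1 ≤ k)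
    (hkbound : (k : ℝ) ≤ ((M : ℝ) / 2) * Real.log ((M : ℝ) / (m : ℝ))) :
    (1 : ℝ) / 2 ≤
      ((Finset.univ.filter fun x : Fin k → Fin M =>
          m ≤ ((Finset.univ : Finset (Fin M)) \ Finset.image x Finset.univ).card).card : ℝ)
        / (M ^ k : ℕ) := by
  have hmM : m < M := by
    have hpos : (0 : ℝ) < M / 2 * log (M / m) := by
      have : (1 : ℝ) ≤ k := by exact_mod_cast hk
      linarith
    have hMm := (log_pos_iff (by positivity)).1 (pos_of_mul_pos_right hpos (by positivity))
    rw [one_lt_div (by exact_mod_cast hm)] at hMm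
    exact_mod_cast hMm
  have hp := cast_le_missProb_mul_two_add hm hmM hkbound
  have hMp : (m : ℝ) ≤ M * missProb M k := by
    have hM : (2 : ℝ) ≤ M := by exact_mod_cast (by omega : 2 ≤ M)
    nlinarith [mul_nonneg (sub_nonneg.2 hM) (mul_nonneg (missProb_nonneg M k)
      (sub_nonneg.2 (missProb_le_one M k)))]
  have : Nonempty (Fin M) := ⟨⟨0, by omega⟩⟩
  have h := card_le_two_mul_card_filter_le_card_unseen (ι := Fin k) (α := Fin M)
    (by simpa using hMp) (by simpa using two_mul_mul_one_sub_le_sq hp)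
  rw [Fintype.card_fun, Fintype.card_fin, Fintype.card_fin] at h
  rw [le_div_iff₀ (by exact_mod_cast pow_pos (by omega) k)]
  have h' : ((M ^ k : ℕ) : ℝ) ≤
      2 * (#{x : Fin k → Fin M | m ≤ #(univ \ image x univ)} : ℝ) := by
    exact_mod_cast h
  linarith

theorem stmt15 (M m k : ℕ) (hm : 1 ≤ m) (hmM : m ≤ M) (hk : 1 ≤ k)
    (hkbound : (k : ℝ) ≤ ((M : ℝ) / 2) * Real.log ((M : ℝ) / (m : ℝ))) :
    (1 : ℝ) / 2 ≤
      ((Finset.univ.filter fun x : Fin k → Fin M =>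
          m ≤ ((Finset.univ : Finset (Fin M)) \ Finset.image x Finset.univ).card).card : ℝ)
        / (M ^ k : ℕ) :=
  stmt15_general M m k hm hk hkbound
end
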